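/- For every positive integer m, the triple sum $\sum_{l_1=1}^{m-1}(1/4)^{l_1-1}(3/4)\left(l_1+\sum_{l_2=1}^{m-l_1-1}(1/2)^{l_2}\left(2l_2+m-l_1-l_2+\sum_{l_3=0}^{m-l_1-l_2} l_3\binom{m-l_1-l_2}{l_3}(3/4)^{l_3}(1/4)^{m-l_1-l_2-l_3}\right)\right)$ equals $\frac{7}{4}m-\frac{1}{2}-\frac{4m+22}{4^m}-\frac{24m-45}{2^{m+1}}$. -/

import Mathlib

open Finset


lemma sum_geo_half (N : ℕ) : ∑ k ∈ range N, (1/2:ℝ)^k = 2 - 2*(1/2)^N := by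
  induction N with
  | zero => simp
  | succ n ih => rw [Finset.sum_range_succ, ih]; ring

lemma sum_k_half (N : ℕ) : ∑ k ∈ range N, (k:ℝ)*(1/2)^k = 2 - (2*N+2)*(1/2)^N := by
  induction N with
  | zero => simp
  | succ n ih => rw [Finset.sum_range_succ, ih]; push_cast; ring

lemma sum_geo_quarter (N : ℕ) : ∑ k ∈ range N, (1/4:ℝ)^k = 4/3 - (4/3)*(1/4)^N := by
  induction N with
  | zero => simp
  | succ n ih => rw [Finset.sum_range_succ, ih]; ring

lemma sum_k_quarter (N : ℕ) : ∑ k ∈ range N, (k:ℝ)*(1/4)^k = 4/9 - ((12*N+4)/9)*(1/4)^N := by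
  induction N with
  | zero => simp
  | succ n ih => rw [Finset.sum_range_succ, ih]; push_cast; ring

lemma binom_mean (n : ℕ) : ∑ l3 ∈ range (n+1),
    (l3 : ℝ) * (Nat.choose n l3) * (3 / 4) ^ l3 * (1 / 4) ^ (n - l3) = 3/4 * n := by
  cases n with
  | zero => simp
  | succ n =>
    rw [Finset.sum_range_succ']
    have key : ∀ i ∈ range (n+1), ((i+1 : ℕ) : ℝ) * ((n+1).choose (i+1)) * (3/4)^(i+1) * (1/4)^(n+1-(i+1)) =
        ((n:ℝ)+1) * (3/4) * ((3/4:ℝ)^i * (1/4)^(n-i) * (n.choose i)) := by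
      intro i hi
      have h := Nat.add_one_mul_choose_eq n i
      have h' : ((n+1) * n.choose i : ℝ) = ((n+1).choose (i+1) * (i+1) : ℕ) := by exact_mod_cast congrArg (Nat.cast : ℕ → ℝ) h
      push_cast at h' ⊢
      linear_combination (-(3/4:ℝ)^(i+1)*(1/4)^(n-i)) * h'
    rw [Finset.sum_congr rfl key, ← Finset.mul_sum]
    have hp : ∑ i ∈ range (n+1), (3/4:ℝ)^i * (1/4)^(n-i) * (n.choose i) = 1 := by
      have := add_pow (3/4:ℝ) (1/4) n
      norm_num at this
      rw [← this]
    rw [hp]; push_cast; ring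

lemma inner2 (a b : ℕ) (hab : b ≤ a) :
    ∑ l2 ∈ Finset.Icc 1 (a - b - 1),
      ((1 / 2 : ℝ) ^ l2 * ((2 * l2 + (a : ℝ) - b - l2) + 3 / 4 * ((a - b - l2 : ℕ) : ℝ))) =
    1/2 + 7/4 * ((a - b : ℕ) : ℝ) - (8 * ((a - b : ℕ) : ℝ) + 1) / 2 ^ ((a - b) + 1) := by
  rcases Nat.eq_zero_or_pos (a - b) with h0 | hpos
  · rw [h0]; norm_num
  · obtain ⟨L, hL⟩ : ∃ L, a - b = L + 1 := ⟨a - b - 1, by omega⟩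
    have ea : a = b + (L + 1) := by omega
    rw [← Finset.Ico_add_one_right_eq_Icc, Finset.sum_Ico_eq_sum_range]
    have hb : a - b - 1 + 1 - 1 = L := by omega
    rw [hb]
    have key : ∀ i ∈ Finset.range L,
        ((1 / 2 : ℝ) ^ (1+i) * ((2 * ((1+i:ℕ):ℝ) + (a : ℝ) - b - ((1+i:ℕ):ℝ)) + 3 / 4 * ((a - b - (1+i) : ℕ) : ℝ))) =
        (1 + 7/8 * L) * (1/2)^i + (1/8) * ((i:ℝ) * (1/2)^i) := by
      intro i hi
      simp only [Finset.mem_range] at hi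
      have h1 : a - b - (1+i) = L - i := by omega
      have h2 : ((a:ℕ):ℝ) = (b:ℝ) + (L + 1) := by exact_mod_cast congrArg (Nat.cast : ℕ → ℝ) ea
      rw [h1, Nat.cast_sub (by omega : i ≤ L), h2]
      push_cast
      ring
    rw [Finset.sum_congr rfl key, Finset.sum_add_distrib, ← Finset.mul_sum, ← Finset.mul_sum,
      sum_geo_half, sum_k_half, hL]
    have h2 : ((1:ℝ)/2)^L = 1/2^L := one_div_pow 2 L
    have hne : (2:ℝ)^L ≠ 0 := by positivity
    rw [h2]
    push_cast
    field_simp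
    ring

theorem triple_sum_mean_duration (m : ℕ) (hm : 0 < m) :
    ∑ l1 ∈ Finset.Icc 1 (m - 1),
      ((1 / 4 : ℝ) ^ (l1 - 1) * (3 / 4) *
        ((l1 : ℝ) +
          ∑ l2 ∈ Finset.Icc 1 (m - l1 - 1),
            ((1 / 2 : ℝ) ^ l2 *
              ((2 * l2 + (m : ℝ) - l1 - l2) +
                ∑ l3 ∈ Finset.range (m - l1 - l2 + 1),
                  (l3 : ℝ) * (Nat.choose (m - l1 - l2) l3) *
                    (3 / 4) ^ l3 * (1 / 4) ^ (m - l1 - l2 - l3))))) =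
    (7 / 4 : ℝ) * m - 1 / 2 - (4 * m + 22) / 4 ^ m - (24 * m - 45) / 2 ^ (m + 1) := by
  obtain ⟨K, rfl⟩ : ∃ K, m = K + 1 := ⟨m - 1, by omega⟩
  simp only [binom_mean]
  rw [show K + 1 - 1 = K from rfl, ← Finset.Ico_add_one_right_eq_Icc, Finset.sum_Ico_eq_sum_range,
    show K + 1 - 1 = K from rfl]
  have key : ∀ i ∈ Finset.range K,
      ((1 / 4 : ℝ) ^ (1 + i - 1) * (3 / 4) *
        (((1 + i : ℕ) : ℝ) +
          ∑ l2 ∈ Finset.Icc 1 (K + 1 - (1 + i) - 1),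
            ((1 / 2 : ℝ) ^ l2 *
              ((2 * l2 + ((K + 1 : ℕ) : ℝ) - ((1 + i : ℕ) : ℝ) - l2) +
                3 / 4 * ((K + 1 - (1 + i) - l2 : ℕ) : ℝ))))) =
      (9/8 + 21/16*(K:ℝ))*(1/4)^i - 9/16*((i:ℝ)*(1/4)^i)
        - ((24*(K:ℝ)+3)/(4*2^(K+1)))*((1/4:ℝ)^i*2^i) + (6/2^(K+1))*((i:ℝ)*((1/4:ℝ)^i*2^i)) := by
    intro i hi
    simp only [Finset.mem_range] at hi
    rw [inner2 (K+1) (1+i) (by omega)]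
    rw [show K + 1 - (1 + i) = K - i from by omega, Nat.cast_sub (by omega : i ≤ K),
      show 1 + i - 1 = i from by omega]
    have hpow : (2:ℝ)^(K - i + 1) = 2^(K+1)/2^i := by
      rw [eq_div_iff (by positivity)]
      rw [← pow_add]
      congr 1
      omega
    rw [hpow]
    have hne1 : (2:ℝ)^(K+1) ≠ 0 := by positivity
    have hne2 : (2:ℝ)^i ≠ 0 := by positivity
    push_cast
    field_simp
    ring
  rw [Finset.sum_congr rfl key]
  have hhalf : ∀ i ∈ Finset.range K, ((1/4:ℝ)^i*2^i) = (1/2:ℝ)^i := by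
    intro i _
    rw [← mul_pow]; norm_num
  simp only [Finset.sum_sub_distrib, Finset.sum_add_distrib, ← Finset.mul_sum]
  rw [Finset.sum_congr rfl hhalf,
    Finset.sum_congr rfl (fun i hi => by rw [hhalf i hi] :
      ∀ i ∈ Finset.range K, ((i:ℝ)*((1/4:ℝ)^i*2^i)) = (i:ℝ)*(1/2:ℝ)^i),
    sum_geo_half, sum_k_half, sum_geo_quarter, sum_k_quarter]
  have e2 : ((1:ℝ)/2)^K = 1/2^K := one_div_pow 2 K
  have e4 : ((1:ℝ)/4)^K = 1/(2^K)^2 := by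
    rw [one_div_pow]
    congr 1
    rw [show (4:ℝ) = 2^2 by norm_num, ← pow_mul, mul_comm, pow_mul]
  have e3 : (4:ℝ)^(K+1) = 4*(2^K)^2 := by
    rw [pow_succ, show (4:ℝ) = 2^2 by norm_num, ← pow_mul, mul_comm 2 K, pow_mul]
    ring
  have hne : (2:ℝ)^K ≠ 0 := by positivity
  rw [e2, e4, e3]
  push_cast
  rw [pow_succ, pow_succ, pow_succ]
  field_simp
  ring
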